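/- arXiv:1401.3147 — 3 statements merged into one kernel-verified Lean document; each statement's English description precedes it below -/
import Mathlib

section
/- Localization lemma: let F: V → ℝ^k be a map on a weighted finite graph, S ⊆ V with S ∩ supp(F) ≠ ∅, and 0 < ε < 2. Define the cut-off θ(v) = 0 if F(v) = 0 and θ(v) = max{0, 1 − d̄_F(v, S ∩ supp(F))/ε} otherwise, and set Ψ := θ·F. Then for every edge, i.e. every pair u,v ∈ V with w(u,v) > 0, one has ‖Ψ(u) + Ψ(v)‖ ≤ (1 + 2/ε)·‖F(u) + F(v)‖. -/
open Finset

namespace DualCheeger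

variable {N : ℕ}

/-- The degree of a vertex `u`: `d_u = ∑_v w u v`. -/
def degree (w : Fin N → Fin N → ℝ) (u : Fin N) : ℝ := ∑ v, w u v

/-- A weighted finite graph structure on `Fin N`: symmetric nonnegative weights,
no self-loops, and strictly positive degrees. -/
def IsWeightedGraph (w : Fin N → Fin N → ℝ) : Prop :=
  (∀ u v, w u v = w v u) ∧ (∀ u v, 0 ≤ w u v) ∧ (∀ u, w u u = 0) ∧
    ∀ u, 0 < degree w u

/-- `|E(A,B)| = ∑_{u ∈ A} ∑_{v ∈ B} w u v`. -/
def Ew (w : Fin N → Fin N → ℝ) (A B : Finset (Fin N)) : ℝ :=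
  ∑ u ∈ A, ∑ v ∈ B, w u v

/-- `vol(A) = ∑_{u ∈ A} d_u`. -/
def vol (w : Fin N → Fin N → ℝ) (A : Finset (Fin N)) : ℝ := ∑ u ∈ A, degree w u

/-- The expansion `φ(S) = |E(S, Sᶜ)| / vol(S)`. -/
noncomputable def expansion (w : Fin N → Fin N → ℝ) (S : Finset (Fin N)) : ℝ :=
  Ew w S Sᶜ / vol w S

/-- `φ̄(V₁,V₂) = 2|E(V₁,V₂)| / vol(V₁ ∪ V₂)`. -/
noncomputable def phibar (w : Fin N → Fin N → ℝ) (V₁ V₂ : Finset (Fin N)) : ℝ :=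
  2 * Ew w V₁ V₂ / vol w (V₁ ∪ V₂)

/-- A `k`-subpartition: `k` nonempty pairwise disjoint subsets. -/
def IsSubpartition (k : ℕ) (P : Fin k → Finset (Fin N)) : Prop :=
  (∀ i, (P i).Nonempty) ∧ ∀ i j, i ≠ j → Disjoint (P i) (P j)

/-- The `k`-way Cheeger constant `h(k)`. -/
noncomputable def cheeger (w : Fin N → Fin N → ℝ) (k : ℕ) : ℝ :=
  sInf { x | ∃ P : Fin k → Finset (Fin N), IsSubpartition k P ∧
    x = ⨆ i, expansion w (P i) }

/-- A `k`-sub-bipartition: `k` pairs of subsets, all `2k` subsets pairwise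
disjoint, with each union `V_{2i-1} ∪ V_{2i}` nonempty. -/
def IsSubBipartition (k : ℕ) (P : Fin k → Finset (Fin N) × Finset (Fin N)) : Prop :=
  (∀ i, Disjoint (P i).1 (P i).2) ∧
    (∀ i j, i ≠ j → Disjoint ((P i).1 ∪ (P i).2) ((P j).1 ∪ (P j).2)) ∧
    ∀ i, ((P i).1 ∪ (P i).2).Nonempty

/-- The `k`-way dual Cheeger constant `h̄(k)`. -/
noncomputable def dualCheeger (w : Fin N → Fin N → ℝ) (k : ℕ) : ℝ :=
  sSup { x | ∃ P : Fin k → Finset (Fin N) × Finset (Fin N), IsSubBipartition k P ∧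
    x = ⨅ i, phibar w (P i).1 (P i).2 }

/-- `lam` enumerates the eigenvalues of the normalized Laplacian
`Δ f (u) = f u - d_u⁻¹ ∑_v w u v * f v` in nondecreasing order with multiplicity,
witnessed by a `μ`-orthonormal eigenbasis `f`. -/
def IsLapEigenbasis (w : Fin N → Fin N → ℝ) (lam : Fin N → ℝ)
    (f : Fin N → Fin N → ℝ) : Prop :=
  Monotone lam ∧
    (∀ i j, (∑ u, degree w u * f i u * f j u) = if i = j then (1 : ℝ) else 0) ∧
    ∀ i u, f i u - (degree w u)⁻¹ * ∑ v, w u v * f i v = lam i * f i u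

/-- The dual Rayleigh quotient of a function `f : V → ℝ`. -/
noncomputable def dualRayleigh (w : Fin N → Fin N → ℝ) (f : Fin N → ℝ) : ℝ :=
  (1 / 2 * ∑ u, ∑ v, w u v * (f u + f v) ^ 2) / ∑ u, degree w u * f u ^ 2

/-- The dual Rayleigh quotient of a map `F : V → ℝ^k`. -/
noncomputable def dualRayleighVec (w : Fin N → Fin N → ℝ) {k : ℕ}
    (F : Fin N → EuclideanSpace ℝ (Fin k)) : ℝ :=
  (1 / 2 * ∑ u, ∑ v, w u v * ‖F u + F v‖ ^ 2) / ∑ u, degree w u * ‖F u‖ ^ 2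

/-- The rough projective-space distance `d̄_F` between (the projections of)
`F u` and `F v`. -/
noncomputable def dbar {k : ℕ} (F : Fin N → EuclideanSpace ℝ (Fin k))
    (u v : Fin N) : ℝ :=
  min ‖‖F u‖⁻¹ • F u - ‖F v‖⁻¹ • F v‖ ‖‖F u‖⁻¹ • F u + ‖F v‖⁻¹ • F v‖

/-- The `l²` mass of `F` on `S`: `ℰ_S = ∑_{u ∈ S} d_u ‖F u‖²`. -/
noncomputable def mass (w : Fin N → Fin N → ℝ) {k : ℕ}
    (F : Fin N → EuclideanSpace ℝ (Fin k)) (S : Finset (Fin N)) : ℝ :=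
  ∑ u ∈ S, degree w u * ‖F u‖ ^ 2

/-- The distance `d̄_F(v, T)` from a vertex to a set. -/
noncomputable def dbarSet {k : ℕ} (F : Fin N → EuclideanSpace ℝ (Fin k))
    (v : Fin N) (T : Set (Fin N)) : ℝ :=
  sInf { x | ∃ t ∈ T, x = dbar F v t }

/-- The modified dual Cheeger constant `h̄*(k)`. -/
noncomputable def dualCheegerStar (w : Fin N → Fin N → ℝ) (k : ℕ) : ℝ :=
  sSup { x | ∃ P : Fin k → Finset (Fin N) × Finset (Fin N), IsSubBipartition k P ∧
    x = ⨅ i, (2 * Ew w (P i).1 (P i).2 + 1 / 2 * Ew w ((P i).1 ∪ (P i).2)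
        (Finset.univ \ Finset.univ.biUnion (fun j => (P j).1 ∪ (P j).2))) /
      vol w ((P i).1 ∪ (P i).2) }

/-- `G` is bipartite: `V = A ∪ Aᶜ` with no edges inside `A` nor inside `Aᶜ`. -/
def IsBipartite (w : Fin N → Fin N → ℝ) : Prop :=
  ∃ A : Finset (Fin N), (∀ u ∈ A, ∀ v ∈ A, w u v = 0) ∧
    ∀ u ∈ Aᶜ, ∀ v ∈ Aᶜ, w u v = 0

/-- The equivalence relation generated by adjacency (connected components). -/
def Reach (w : Fin N → Fin N → ℝ) : Fin N → Fin N → Prop :=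
  Relation.EqvGen fun u v => 0 < w u v

/-- `w` is the weight function of a weighted cycle on `Fin N`: symmetric,
nonnegative, and positive exactly on consecutive vertices mod `N`. -/
def IsCycleWeight (N : ℕ) (w : Fin N → Fin N → ℝ) : Prop :=
  (∀ u v, w u v = w v u) ∧ (∀ u v, 0 ≤ w u v) ∧
    ∀ i j : Fin N, 0 < w i j ↔ ((i.val + 1) % N = j.val ∨ (j.val + 1) % N = i.val)

/-- The unweighted cycle on `Fin N`. -/
noncomputable def cycleWeight (N : ℕ) : Fin N → Fin N → ℝ := fun i j =>
  if (i.val + 1) % N = j.val ∨ (j.val + 1) % N = i.val then 1 else 0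


section AuxLocalization

variable {E : Type*} [NormedAddCommGroup E] [NormedSpace ℝ E]

private lemma min_norm_triangle (x y z : E) :
    min ‖x - z‖ ‖x + z‖ ≤ min ‖x - y‖ ‖x + y‖ + min ‖y - z‖ ‖y + z‖ := by
  rcases min_cases ‖x - y‖ ‖x + y‖ with ⟨h1, -⟩ | ⟨h1, -⟩ <;>
    rcases min_cases ‖y - z‖ ‖y + z‖ with ⟨h2, -⟩ | ⟨h2, -⟩ <;> rw [h1, h2]
  · refine (min_le_left _ _).trans ?_
    have h : x - z = (x - y) + (y - z) := by abel
    rw [h]; exact norm_add_le _ _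
  · refine (min_le_right _ _).trans ?_
    have h : x + z = (x - y) + (y + z) := by abel
    rw [h]; exact norm_add_le _ _
  · refine (min_le_right _ _).trans ?_
    have h : x + z = (x + y) - (y - z) := by abel
    rw [h]; exact norm_sub_le _ _
  · refine (min_le_left _ _).trans ?_
    have h : x - z = (x + y) - (y + z) := by abel
    rw [h]; exact norm_sub_le _ _

private lemma small_vec_bound (a b : E) (ha : a ≠ 0) (hb : b ≠ 0)
    (hle : ‖b‖ ≤ ‖a‖) :
    min ‖‖a‖⁻¹ • a - ‖b‖⁻¹ • b‖ ‖‖a‖⁻¹ • a + ‖b‖⁻¹ • b‖ * ‖b‖ ≤ 2 * ‖a + b‖ := by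
  have hbn : (0:ℝ) < ‖b‖ := norm_pos_iff.mpr hb
  have han : (0:ℝ) < ‖a‖ := norm_pos_iff.mpr ha
  have h1 : min ‖‖a‖⁻¹ • a - ‖b‖⁻¹ • b‖ ‖‖a‖⁻¹ • a + ‖b‖⁻¹ • b‖ * ‖b‖ ≤
      ‖‖a‖⁻¹ • a + ‖b‖⁻¹ • b‖ * ‖b‖ := by
    gcongr; exact min_le_right _ _
  refine h1.trans ?_
  have h2 : ‖‖a‖⁻¹ • a + ‖b‖⁻¹ • b‖ * ‖b‖ = ‖(‖b‖ * ‖a‖⁻¹) • a + b‖ := by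
    have e : (‖b‖ * ‖a‖⁻¹) • a + b = ‖b‖ • (‖a‖⁻¹ • a + ‖b‖⁻¹ • b) := by
      rw [smul_add, smul_smul, smul_smul, mul_inv_cancel₀ hbn.ne', one_smul]
    rw [e, norm_smul, Real.norm_eq_abs, abs_of_pos hbn, mul_comm]
  rw [h2]
  have h3 : (‖b‖ * ‖a‖⁻¹) • a + b = (a + b) - (1 - ‖b‖ * ‖a‖⁻¹) • a := by
    rw [sub_smul, one_smul]; abel
  rw [h3]
  refine (norm_sub_le _ _).trans ?_
  have h4 : ‖(1 - ‖b‖ * ‖a‖⁻¹) • a‖ = ‖a‖ - ‖b‖ := by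
    rw [norm_smul, Real.norm_eq_abs, abs_of_nonneg, sub_mul, one_mul,
      mul_assoc, inv_mul_cancel₀ han.ne', mul_one]
    have : ‖b‖ * ‖a‖⁻¹ ≤ 1 := by
      rw [← div_eq_mul_inv, div_le_one han]; exact hle
    linarith
  rw [h4]
  have h5 : ‖a‖ - ‖b‖ ≤ ‖a + b‖ := by
    have := norm_sub_le (a + b) b
    simp only [add_sub_cancel_right] at this
    linarith
  linarith

end AuxLocalization

private lemma dbar_nonneg {N k : ℕ} (F : Fin N → EuclideanSpace ℝ (Fin k))
    (u v : Fin N) : 0 ≤ dbar F u v :=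
  le_min (norm_nonneg _) (norm_nonneg _)

private lemma dbar_symm {N k : ℕ} (F : Fin N → EuclideanSpace ℝ (Fin k))
    (u v : Fin N) : dbar F u v = dbar F v u := by
  unfold dbar
  rw [norm_sub_rev, add_comm]

/-- Lemma 5.3 (localization lemma): for the cut-off `θ` of `F` around
`S ∩ supp F` at scale `ε < 2` and `Ψ = θ • F`, every edge satisfies
`‖Ψ u + Ψ v‖ ≤ (1 + 2/ε) ‖F u + F v‖`. -/
theorem localization_lemma {N k : ℕ} (w : Fin N → Fin N → ℝ)
    (hG : IsWeightedGraph w) (F : Fin N → EuclideanSpace ℝ (Fin k))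
    (S : Finset (Fin N)) (hS : ∃ v ∈ S, F v ≠ 0)
    (ε : ℝ) (hε0 : 0 < ε) (hε2 : ε < 2) (θ : Fin N → ℝ)
    (hθ0 : ∀ v, F v = 0 → θ v = 0)
    (hθ1 : ∀ v, F v ≠ 0 →
      θ v = max 0 (1 - dbarSet F v {t | t ∈ S ∧ F t ≠ 0} / ε)) :
    ∀ u v : Fin N, 0 < w u v →
      ‖θ u • F u + θ v • F v‖ ≤ (1 + 2 / ε) * ‖F u + F v‖ := by
  set T : Set (Fin N) := {t | t ∈ S ∧ F t ≠ 0} with hTdef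
  obtain ⟨v0, hv0S, hv0⟩ := hS
  have hTne : T.Nonempty := ⟨v0, hv0S, hv0⟩
  have hfin : ∀ c, {x | ∃ t ∈ T, x = dbar F c t}.Finite := by
    intro c
    have h : {x | ∃ t ∈ T, x = dbar F c t} = (fun t => dbar F c t) '' T := by
      ext x; simp [Set.mem_image, eq_comm]
    rw [h]; exact (Set.toFinite T).image _
  have hne : ∀ c, {x | ∃ t ∈ T, x = dbar F c t}.Nonempty :=
    fun c => ⟨_, v0, ⟨hv0S, hv0⟩, rfl⟩
  have hbdd : ∀ c, BddBelow {x | ∃ t ∈ T, x = dbar F c t} :=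
    fun c => (hfin c).bddBelow
  have hdnn : ∀ c, 0 ≤ dbarSet F c T := by
    intro c
    apply Real.sInf_nonneg
    rintro x ⟨t, -, rfl⟩; exact dbar_nonneg F c t
  have hTri : ∀ a b : Fin N, dbarSet F a T ≤ dbar F a b + dbarSet F b T := by
    intro a b
    obtain ⟨t, ht, hteq⟩ := (hne b).csInf_mem (hfin b)
    have h1 : dbarSet F a T ≤ dbar F a t := csInf_le (hbdd a) ⟨t, ht, rfl⟩
    have h2 : dbar F a t ≤ dbar F a b + dbar F b t := by
      unfold dbar; exact min_norm_triangle _ _ _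
    have h3 : dbarSet F b T = dbar F b t := hteq
    rw [h3]; exact h1.trans h2
  have hθnn : ∀ c, 0 ≤ θ c := by
    intro c
    by_cases hc : F c = 0
    · rw [hθ0 c hc]
    · rw [hθ1 c hc]; exact le_max_left _ _
  have hθle1 : ∀ c, θ c ≤ 1 := by
    intro c
    by_cases hc : F c = 0
    · rw [hθ0 c hc]; norm_num
    · rw [hθ1 c hc]
      refine max_le (by norm_num) ?_
      have : 0 ≤ dbarSet F c T / ε := div_nonneg (hdnn c) hε0.le
      linarith
  have hLip : ∀ a b : Fin N, F a ≠ 0 → F b ≠ 0 →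
      |θ a - θ b| ≤ dbar F a b / ε := by
    intro a b ha hb
    rw [hθ1 a ha, hθ1 b hb, max_comm 0 _, max_comm 0 _]
    refine (abs_max_sub_max_le_abs _ _ _).trans ?_
    have h1 : |1 - dbarSet F a T / ε - (1 - dbarSet F b T / ε)|
        = |dbarSet F a T - dbarSet F b T| / ε := by
      rw [show 1 - dbarSet F a T / ε - (1 - dbarSet F b T / ε)
            = (dbarSet F b T - dbarSet F a T) / ε by ring,
        abs_div, abs_of_pos hε0, abs_sub_comm]
    rw [h1]
    gcongr
    rw [abs_sub_le_iff]
    constructor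
    · have := hTri a b; linarith
    · have := hTri b a; rw [dbar_symm F b a] at this; linarith
  have key : ∀ u v : Fin N, ‖F v‖ ≤ ‖F u‖ →
      ‖θ u • F u + θ v • F v‖ ≤ (1 + 2 / ε) * ‖F u + F v‖ := by
    intro u v hle
    have h2ε : (0:ℝ) ≤ 2 / ε := by positivity
    by_cases hv : F v = 0
    · rw [hθ0 v hv, hv, zero_smul, add_zero, add_zero, norm_smul,
        Real.norm_eq_abs, abs_of_nonneg (hθnn u)]
      nlinarith [norm_nonneg (F u), hθle1 u, hθnn u]
    · have hu : F u ≠ 0 := by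
        intro h
        apply hv
        rw [← norm_eq_zero]
        have := norm_nonneg (F v)
        rw [h, norm_zero] at hle
        linarith
      have hrw : θ u • F u + θ v • F v = θ u • (F u + F v) + (θ v - θ u) • F v := by
        rw [smul_add, sub_smul]; abel
      calc ‖θ u • F u + θ v • F v‖
          ≤ θ u * ‖F u + F v‖ + |θ v - θ u| * ‖F v‖ := by
            rw [hrw]
            refine (norm_add_le _ _).trans ?_
            rw [norm_smul, norm_smul, Real.norm_eq_abs, Real.norm_eq_abs,
              abs_of_nonneg (hθnn u)]
        _ ≤ 1 * ‖F u + F v‖ + (dbar F u v / ε) * ‖F v‖ := by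
            gcongr
            · exact hθle1 u
            · rw [abs_sub_comm]; exact hLip u v hu hv
        _ ≤ 1 * ‖F u + F v‖ + (2 / ε) * ‖F u + F v‖ := by
            have hkey2 : dbar F u v * ‖F v‖ ≤ 2 * ‖F u + F v‖ := by
              unfold dbar; exact small_vec_bound (F u) (F v) hu hv hle
            have h1 : dbar F u v / ε * ‖F v‖ = dbar F u v * ‖F v‖ / ε := by ring
            have h2 : 2 / ε * ‖F u + F v‖ = 2 * ‖F u + F v‖ / ε := by ring
            rw [h1, h2]
            gcongr
        _ = (1 + 2 / ε) * ‖F u + F v‖ := by ring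
  intro u v _
  rcases le_total (‖F v‖) (‖F u‖) with h | h
  · exact key u v h
  · have hk := key v u h
    rw [add_comm (θ v • F v), add_comm (F v)] at hk
    exact hk


end DualCheeger
end

section
/- For any weighted cycle C_N with N odd, h(k) + h̄(k) = 1 for every natural number 2 ≤ k ≤ N. -/
/-!
Each set of a `k`-subpartition with `k ≥ 2` misses a vertex `z` of the cycle, so it induces a
subgraph of the path `C_N - z`, which is bipartite: colour a vertex by the parity of its forward
distance from `z`. For disjoint `V₁, V₂` the volume of `V₁ ∪ V₂` is
`|E(V₁,V₁)| + |E(V₂,V₂)| + 2|E(V₁,V₂)| + |E(V₁ ∪ V₂, (V₁ ∪ V₂)ᶜ)|`, hence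
`φ(V₁ ∪ V₂) + φ̄(V₁,V₂) ≤ 1`, with equality when `V₁` and `V₂` are independent. So every
subpartition yields a sub-bipartition with `min φ̄ = 1 - max φ`, every sub-bipartition yields a
subpartition with `max φ ≤ 1 - min φ̄`, and `h(k) = 1 - h̄(k)`.
-/

open Finset

namespace DualCheeger

variable {N : ℕ}

lemma csInf_add_csSup_eq {A B : Set ℝ} {c : ℝ} (hA : A.Nonempty) (hA' : BddBelow A)
    (hAB : ∀ a ∈ A, c - a ∈ B) (hBA : ∀ b ∈ B, ∃ a ∈ A, a ≤ c - b) :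
    sInf A + sSup B = c := by
  obtain ⟨a₀, ha₀⟩ := hA
  have hupper : ∀ b ∈ B, b ≤ c - sInf A := fun b hb => by
    obtain ⟨a, ha, hab⟩ := hBA b hb
    linarith [csInf_le hA' ha]
  have h₁ : sSup B ≤ c - sInf A := csSup_le ⟨c - a₀, hAB a₀ ha₀⟩ hupper
  have h₂ : c - sSup B ≤ sInf A := le_csInf ⟨a₀, ha₀⟩ fun a ha => by
    linarith [le_csSup ⟨_, hupper⟩ (hAB a ha)]
  linarith

section Weights

variable {w : Fin N → Fin N → ℝ} {V₁ V₂ : Finset (Fin N)}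

lemma Ew_nonneg (hnn : ∀ u v, 0 ≤ w u v) (A B : Finset (Fin N)) : 0 ≤ Ew w A B :=
  sum_nonneg fun u _ => sum_nonneg fun v _ => hnn u v

lemma vol_nonneg (hnn : ∀ u v, 0 ≤ w u v) (S : Finset (Fin N)) : 0 ≤ vol w S :=
  sum_nonneg fun u _ => sum_nonneg fun v _ => hnn u v

lemma expansion_nonneg (hnn : ∀ u v, 0 ≤ w u v) (S : Finset (Fin N)) : 0 ≤ expansion w S :=
  div_nonneg (Ew_nonneg hnn _ _) (vol_nonneg hnn S)

lemma Ew_comm (hsym : ∀ u v, w u v = w v u) (A B : Finset (Fin N)) : Ew w A B = Ew w B A := by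
  rw [Ew, sum_comm]
  simp only [Ew, hsym]

lemma Ew_union_left {A B : Finset (Fin N)} (hd : Disjoint A B) (C : Finset (Fin N)) :
    Ew w (A ∪ B) C = Ew w A C + Ew w B C :=
  sum_union hd

lemma Ew_union_right {B C : Finset (Fin N)} (hd : Disjoint B C) (A : Finset (Fin N)) :
    Ew w A (B ∪ C) = Ew w A B + Ew w A C := by
  simp only [Ew, sum_union hd, sum_add_distrib]

lemma vol_eq_Ew_add_Ew_compl (S : Finset (Fin N)) : vol w S = Ew w S S + Ew w S Sᶜ := by
  simp only [vol, Ew, degree, ← sum_add_distrib, sum_add_sum_compl]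

lemma vol_union_eq (hsym : ∀ u v, w u v = w v u) (hd : Disjoint V₁ V₂) :
    vol w (V₁ ∪ V₂) =
      Ew w V₁ V₁ + Ew w V₂ V₂ + 2 * Ew w V₁ V₂ + Ew w (V₁ ∪ V₂) (V₁ ∪ V₂)ᶜ := by
  rw [vol_eq_Ew_add_Ew_compl, Ew_union_left hd, Ew_union_right hd, Ew_union_right hd,
    Ew_comm hsym V₂ V₁]
  ring

lemma expansion_union_add_phibar_le_one (hsym : ∀ u v, w u v = w v u)
    (hnn : ∀ u v, 0 ≤ w u v) (hd : Disjoint V₁ V₂) :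
    expansion w (V₁ ∪ V₂) + phibar w V₁ V₂ ≤ 1 := by
  rw [expansion, phibar, ← add_div]
  refine div_le_one_of_le₀ ?_ (vol_nonneg hnn _)
  rw [vol_union_eq hsym hd]
  linarith [Ew_nonneg hnn V₁ V₁, Ew_nonneg hnn V₂ V₂]

lemma expansion_union_add_phibar_eq_one (hsym : ∀ u v, w u v = w v u) (hd : Disjoint V₁ V₂)
    (h₁ : Ew w V₁ V₁ = 0) (h₂ : Ew w V₂ V₂ = 0) (hvol : vol w (V₁ ∪ V₂) ≠ 0) :
    expansion w (V₁ ∪ V₂) + phibar w V₁ V₂ = 1 := by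
  rw [expansion, phibar, ← add_div, div_eq_one_iff_eq hvol, vol_union_eq hsym hd, h₁, h₂]
  ring

lemma Ew_filter_self_eq_zero (hnn : ∀ u v, 0 ≤ w u v) {S : Finset (Fin N)} {p : Fin N → Prop}
    [DecidablePred p] (hp : ∀ u ∈ S, ∀ v ∈ S, 0 < w u v → p u → ¬p v) :
    Ew w (S.filter p) (S.filter p) = 0 :=
  sum_eq_zero fun u hu => sum_eq_zero fun v hv => by
    rw [mem_filter] at hu hv
    by_contra h
    exact hp u hu.1 v hv.1 ((hnn u v).lt_of_ne' h) hu.2 hv.2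

lemma phibar_filter_eq_one_sub_expansion (hsym : ∀ u v, w u v = w v u)
    (hnn : ∀ u v, 0 ≤ w u v) (hdeg : ∀ u, 0 < degree w u) {S : Finset (Fin N)}
    (hS : S.Nonempty) (p : Fin N → Prop) [DecidablePred p]
    (hp : ∀ u ∈ S, ∀ v ∈ S, 0 < w u v → (p u ↔ ¬p v)) :
    phibar w (S.filter p) (S.filter (¬p ·)) = 1 - expansion w S := by
  have hd := disjoint_filter_filter_not S S p
  have hU := filter_union_filter_not_eq p S
  have h₁ := Ew_filter_self_eq_zero hnn fun u hu v hv huv => (hp u hu v hv huv).1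
  have h₂ := Ew_filter_self_eq_zero (p := (¬p ·)) hnn fun u hu v hv huv hu' hv' =>
    hu' ((hp u hu v hv huv).2 hv')
  have hvol : vol w S ≠ 0 := (sum_pos (fun u _ => hdeg u) hS).ne'
  have := expansion_union_add_phibar_eq_one hsym hd h₁ h₂ (by rwa [hU])
  rw [hU] at this
  linarith

lemma iSup_expansion_union_le {k : ℕ} [Nonempty (Fin k)] (hsym : ∀ u v, w u v = w v u)
    (hnn : ∀ u v, 0 ≤ w u v) {Q : Fin k → Finset (Fin N) × Finset (Fin N)}
    (hd : ∀ i, Disjoint (Q i).1 (Q i).2) :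
    ⨆ i, expansion w ((Q i).1 ∪ (Q i).2) ≤ 1 - ⨅ i, phibar w (Q i).1 (Q i).2 :=
  ciSup_le fun i => by
    linarith [ciInf_le (Set.finite_range fun i => phibar w (Q i).1 (Q i).2).bddBelow i,
      expansion_union_add_phibar_le_one hsym hnn (hd i)]

end Weights

lemma isSubpartition_singleton_castLE {k : ℕ} (hkN : k ≤ N) :
    IsSubpartition k fun i => {Fin.castLE hkN i} :=
  ⟨fun _ => singleton_nonempty _,
    fun _ _ hij => disjoint_singleton.2 fun h => hij (Fin.castLE_injective hkN h)⟩

lemma IsSubpartition.exists_notMem {k : ℕ} {P : Fin k → Finset (Fin N)}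
    (hP : IsSubpartition k P) (hk : 2 ≤ k) (i : Fin k) : ∃ z, z ∉ P i := by
  have : Nontrivial (Fin k) := Fin.nontrivial_iff_two_le.2 hk
  obtain ⟨j, hji⟩ := exists_ne i
  obtain ⟨z, hz⟩ := hP.1 j
  exact ⟨z, disjoint_left.1 (hP.2 j i hji) hz⟩

lemma IsSubBipartition.isSubpartition_union {k : ℕ}
    {Q : Fin k → Finset (Fin N) × Finset (Fin N)} (hQ : IsSubBipartition k Q) :
    IsSubpartition k fun i => (Q i).1 ∪ (Q i).2 :=
  ⟨hQ.2.2, hQ.2.1⟩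

/-- `(u - z).val` is the forward distance from `z` to `u` along the cycle; a step `u → u + 1`
increases it by one unless the step lands on `z`. -/
lemma even_sub_val_iff_not_even {z u v : Fin N} (huv : (u.val + 1) % N = v.val)
    (hv : v ≠ z) : Even (u - z).val ↔ ¬Even (v - z).val := by
  have hv' : v.val = if u.val + 1 < N then u.val + 1 else 0 := by
    split_ifs with h
    · rw [← huv, Nat.mod_eq_of_lt h]
    · rw [← huv, show u.val + 1 = N by omega, Nat.mod_self]
  have hsub : ∀ a : Fin N,
      (a - z).val = if z.val ≤ a.val then a.val - z.val else N + a.val - z.val := fun a => by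
    split_ifs with h
    exacts [Fin.coe_sub_iff_le.2 h, Fin.coe_sub_iff_lt.2 (Fin.lt_def.2 (by omega))]
  rw [Fin.ne_iff_vne] at hv
  rw [Nat.even_iff, Nat.even_iff, hsub, hsub]
  split_ifs at hv' ⊢ <;> omega

namespace IsCycleWeight

variable {w : Fin N → Fin N → ℝ}

lemma degree_pos (hC : IsCycleWeight N w) (u : Fin N) : 0 < degree w u :=
  lt_of_lt_of_le ((hC.2.2 u ⟨(u.val + 1) % N, Nat.mod_lt _ u.pos⟩).2 (Or.inl rfl))
    (single_le_sum (fun v _ => hC.2.1 u v) (mem_univ _))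

lemma exists_split (hC : IsCycleWeight N w) {S : Finset (Fin N)} (hS : S.Nonempty) {z : Fin N}
    (hz : z ∉ S) :
    ∃ V₁ V₂, Disjoint V₁ V₂ ∧ V₁ ∪ V₂ = S ∧ phibar w V₁ V₂ = 1 - expansion w S := by
  refine ⟨_, _, disjoint_filter_filter_not S S _, filter_union_filter_not_eq _ S,
    phibar_filter_eq_one_sub_expansion hC.1 hC.2.1 hC.degree_pos hS (fun u => Even (u - z).val)
      fun u hu v hv huv => ?_⟩
  have hu : u ≠ z := ne_of_mem_of_not_mem hu hz
  have hv : v ≠ z := ne_of_mem_of_not_mem hv hz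
  rcases (hC.2.2 u v).1 huv with h | h
  · exact even_sub_val_iff_not_even h hv
  · rw [even_sub_val_iff_not_even h hu]
    tauto

lemma exists_subBipartition (hC : IsCycleWeight N w) {k : ℕ} (hk : 2 ≤ k)
    {P : Fin k → Finset (Fin N)} (hP : IsSubpartition k P) :
    ∃ Q, IsSubBipartition k Q ∧ ∀ i, phibar w (Q i).1 (Q i).2 = 1 - expansion w (P i) := by
  choose z hz using hP.exists_notMem hk
  choose V₁ V₂ hd hU hφ using fun i => hC.exists_split (hP.1 i) (hz i)
  refine ⟨fun i => (V₁ i, V₂ i), ⟨hd, fun i j hij => ?_, fun i => ?_⟩, hφ⟩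
  · simpa only [hU] using hP.2 i j hij
  · simpa only [hU] using hP.1 i

end IsCycleWeight

theorem odd_cycle_cheeger_add_dualCheeger_general {N : ℕ}
    (w : Fin N → Fin N → ℝ) (hC : IsCycleWeight N w)
    (k : ℕ) (hk : 2 ≤ k) (hkN : k ≤ N) :
    cheeger w k + dualCheeger w k = 1 := by
  have : Nonempty (Fin k) := ⟨⟨0, by omega⟩⟩
  refine csInf_add_csSup_eq ⟨_, _, isSubpartition_singleton_castLE hkN, rfl⟩ ⟨0, ?_⟩ ?_ ?_
  · rintro _ ⟨P, -, rfl⟩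
    exact Real.iSup_nonneg fun i => expansion_nonneg hC.2.1 _
  · rintro _ ⟨P, hP, rfl⟩
    obtain ⟨Q, hQ, hφ⟩ := hC.exists_subBipartition hk hP
    refine ⟨Q, hQ, ?_⟩
    simp only [hφ]
    exact (OrderIso.subLeft (1 : ℝ)).map_ciSup (Set.finite_range _).bddAbove
  · rintro _ ⟨Q, hQ, rfl⟩
    exact ⟨_, ⟨_, hQ.isSubpartition_union, rfl⟩, iSup_expansion_union_le hC.1 hC.2.1 hQ.1⟩

/-- Proposition 7.2: for odd cycles, `h(k) + h̄(k) = 1` for `2 ≤ k ≤ N`. -/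
theorem odd_cycle_cheeger_add_dualCheeger {N : ℕ} (hN : 3 ≤ N) (hodd : Odd N)
    (w : Fin N → Fin N → ℝ) (hC : IsCycleWeight N w)
    (k : ℕ) (hk : 2 ≤ k) (hkN : k ≤ N) :
    cheeger w k + dualCheeger w k = 1 :=
  odd_cycle_cheeger_add_dualCheeger_general w hC k hk hkN

end DualCheeger
end

section
/- For the unweighted cycle C_N (N ≥ 3): h(1) = 0; h̄(1) = (N−1)/N if N is odd and h̄(1) = 1 if N is even; and for every natural number 2 ≤ k ≤ N, h(k) = 1/⌊N/k⌋ and h̄(k) = 1 − 1/⌊N/k⌋. -/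
open Finset

namespace DualCheeger

variable {N : ℕ}

/-! On `C_N` every degree is `2` and edges are counted through the successor map `u ↦ u + 1`:
with `fwdEdges A B` the vertices of `A` whose successor lies in `B`, one has
`φ(S) = 1 - #(fwdEdges S S) / #S` and, for disjoint `A, B`,
`φ̄(A, B) = #(fwdEdges A B ∪ fwdEdges B A) / #(A ∪ B)`. A nonempty proper `S` is not closed
under the successor, so `φ(S) ≥ 1 / #S` and `φ̄(A, B) ≤ 1 - 1 / #(A ∪ B)`; of `k ≥ 2` disjoint
nonempty sets one has at most `⌊N/k⌋` elements and is proper. Arcs of `⌊N/k⌋` consecutive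
vertices, split by parity for `φ̄`, attain both bounds. For `k = 1`, the parity split of the whole
cycle is crossed by every edge except `N - 1 → 0` when `N` is odd, and an odd cycle has no
bipartition crossed by every edge, since the successor map would swap its two parts. -/

theorem cheeger_eq_of_isLeast {w : Fin N → Fin N → ℝ} {k : ℕ} [NeZero k] {x : ℝ}
    (P : Fin k → Finset (Fin N)) (hP : IsSubpartition k P) (hPx : ∀ i, expansion w (P i) = x)
    (hle : ∀ Q, IsSubpartition k Q → ∃ i, x ≤ expansion w (Q i)) :
    cheeger w k = x := by
  refine IsLeast.csInf_eq ⟨⟨P, hP, by simp [hPx]⟩, ?_⟩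
  rintro _ ⟨Q, hQ, rfl⟩
  obtain ⟨i, hi⟩ := hle Q hQ
  exact hi.trans (le_ciSup (f := fun i => expansion w (Q i)) (Set.finite_range _).bddAbove i)

theorem dualCheeger_eq_of_isGreatest {w : Fin N → Fin N → ℝ} {k : ℕ} [NeZero k] {x : ℝ}
    (P : Fin k → Finset (Fin N) × Finset (Fin N)) (hP : IsSubBipartition k P)
    (hPx : ∀ i, phibar w (P i).1 (P i).2 = x)
    (hle : ∀ Q, IsSubBipartition k Q → ∃ i, phibar w (Q i).1 (Q i).2 ≤ x) :
    dualCheeger w k = x := by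
  refine IsGreatest.csSup_eq ⟨⟨P, hP, by simp [hPx]⟩, ?_⟩
  rintro _ ⟨Q, hQ, rfl⟩
  obtain ⟨i, hi⟩ := hle Q hQ
  exact (ciInf_le (f := fun i => phibar w (Q i).1 (Q i).2) (Set.finite_range _).bddBelow i).trans hi

theorem Ew_add_Ew_compl (w : Fin N → Fin N → ℝ) (S : Finset (Fin N)) :
    Ew w S S + Ew w S Sᶜ = vol w S := by
  simp only [Ew, vol, degree, ← sum_add_distrib, sum_add_sum_compl]

theorem expansion_univ (w : Fin N → Fin N → ℝ) : expansion w univ = 0 := by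
  simp [expansion, Ew]

theorem exists_card_le_card_div {α : Type*} [Fintype α] [DecidableEq α] {k : ℕ} (hk : k ≠ 0)
    (S : Fin k → Finset α) (hS : ∀ i j, i ≠ j → Disjoint (S i) (S j)) :
    ∃ i, #(S i) ≤ Fintype.card α / k := by
  by_contra! h
  have hsum : ∑ i, #(S i) ≤ Fintype.card α := by
    rw [← card_biUnion fun i _ j _ hij => hS i j hij]
    exact card_le_univ _
  have : ∑ _i : Fin k, (Fintype.card α / k + 1) ≤ ∑ i, #(S i) :=
    sum_le_sum fun i _ => h i
  rw [sum_const, card_univ, Fintype.card_fin, smul_eq_mul] at this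
  have := Nat.lt_mul_div_succ (Fintype.card α) (Nat.pos_of_ne_zero hk)
  omega

theorem exists_card_le_div_ne_univ {k : ℕ} (hk : 2 ≤ k) (S : Fin k → Finset (Fin N))
    (hne : ∀ i, (S i).Nonempty) (hS : ∀ i j, i ≠ j → Disjoint (S i) (S j)) :
    ∃ i, #(S i) ≤ N / k ∧ S i ≠ univ := by
  obtain ⟨i, hi⟩ := exists_card_le_card_div (by omega) S hS
  have : Nontrivial (Fin k) := Fin.nontrivial_iff_two_le.2 hk
  obtain ⟨j, hj⟩ := exists_ne i
  obtain ⟨v, hv⟩ := hne j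
  exact ⟨i, by simpa using hi, fun h => disjoint_left.1 (hS j i hj) hv (h ▸ mem_univ v)⟩

theorem even_card_of_swaps {α : Type*} [Fintype α] [DecidableEq α] {f : α → α}
    (hf : f.Injective) {A B : Finset α} (hAB : Disjoint A B) (hcover : A ∪ B = univ)
    (hA : ∀ a ∈ A, f a ∈ B) (hB : ∀ b ∈ B, f b ∈ A) : Even (Fintype.card α) := by
  have h₁ := card_le_card_of_injOn f hA hf.injOn
  have h₂ := card_le_card_of_injOn f hB hf.injOn
  have := card_union_of_disjoint hAB
  rw [hcover, card_univ] at this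
  exact ⟨#A, by omega⟩

theorem mul_add_le_mul_of_lt {i j : ℕ} (m : ℕ) (h : i < j) : i * m + m ≤ j * m :=
  add_one_mul i m ▸ Nat.mul_le_mul_right m h

def arc (a m : ℕ) : Finset (Fin N) := univ.filter fun v => a ≤ v.val ∧ v.val < a + m

theorem card_arc {a m : ℕ} (h : a + m ≤ N) : #(arc a m : Finset (Fin N)) = m := by
  rw [← card_map Fin.valEmbedding, show (arc a m).map Fin.valEmbedding = Ico a (a + m) by
    ext x
    simp only [arc, mem_map, mem_filter, mem_univ, true_and, Fin.valEmbedding_apply, mem_Ico]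
    exact ⟨by rintro ⟨v, hv, rfl⟩; exact hv, fun hx => ⟨⟨x, by omega⟩, hx, rfl⟩⟩]
  simp

theorem isSubpartition_arcs {k m : ℕ} (hm : 0 < m) (hkm : k * m ≤ N) :
    IsSubpartition k fun i : Fin k => (arc (i * m) m : Finset (Fin N)) := by
  refine ⟨fun i => ⟨⟨i * m, ?_⟩, by simp [arc, hm]⟩, fun i j hij => ?_⟩
  · linarith [mul_add_le_mul_of_lt m i.isLt]
  rw [disjoint_left]
  intro v hi hj
  simp only [arc, mem_filter, mem_univ, true_and] at hi hj
  rcases lt_or_gt_of_ne hij with h | h <;> linarith [mul_add_le_mul_of_lt m h]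

def paritySplit (V : Finset (Fin N)) : Finset (Fin N) × Finset (Fin N) :=
  (V.filter fun v => Even v.val, V.filter fun v => ¬Even v.val)

theorem paritySplit_union (V : Finset (Fin N)) : (paritySplit V).1 ∪ (paritySplit V).2 = V :=
  filter_union_filter_not_eq _ _

theorem disjoint_paritySplit (V : Finset (Fin N)) :
    Disjoint (paritySplit V).1 (paritySplit V).2 :=
  disjoint_filter_filter_not _ _ _

theorem IsSubpartition.isSubBipartition_paritySplit {k : ℕ} {P : Fin k → Finset (Fin N)}
    (hP : IsSubpartition k P) : IsSubBipartition k fun i => paritySplit (P i) := by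
  refine ⟨fun i => disjoint_paritySplit _, fun i j hij => ?_, fun i => ?_⟩
  · simpa only [paritySplit_union] using hP.2 i j hij
  · simpa only [paritySplit_union] using hP.1 i

section Cycle

variable [NeZero N]

theorem val_add_one_eq (u : Fin N) : (u + 1).val = if u.val + 1 < N then u.val + 1 else 0 := by
  rw [Fin.val_add, Fin.val_one', Nat.add_mod_mod]
  split_ifs with h
  · exact Nat.mod_eq_of_lt h
  · rw [show u.val + 1 = N by omega, Nat.mod_self]

theorem cycleWeight_eq (u v : Fin N) :
    cycleWeight N u v = if v = u + 1 ∨ v = u - 1 then 1 else 0 := by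
  have key : ∀ a b : Fin N, (a.val + 1) % N = b.val ↔ b = a + 1 := fun a b => by
    rw [Fin.ext_iff, Fin.val_add, Fin.val_one', Nat.add_mod_mod, eq_comm]
  simp only [cycleWeight, key, eq_sub_iff_add_eq, eq_comm (a := u)]

theorem add_one_ne_sub_one (hN : 3 ≤ N) (u : Fin N) : u + 1 ≠ u - 1 := by
  intro h
  have h2 : (1 : Fin N) = -1 := by simpa using congrArg (· - u) h
  have := congrArg Fin.val (eq_neg_iff_add_eq_zero.1 h2)
  rw [Fin.val_add, Fin.val_one', Nat.mod_eq_of_lt (by omega : 1 < N),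
    Nat.mod_eq_of_lt (by omega : 2 < N)] at this
  simp at this

def fwdEdges (A B : Finset (Fin N)) : Finset (Fin N) := A.filter (· + 1 ∈ B)

def crossEdges (A B : Finset (Fin N)) : Finset (Fin N) := fwdEdges A B ∪ fwdEdges B A

open Fin.NatCast in
theorem eq_univ_of_add_one_mem {S : Finset (Fin N)} (hS : S.Nonempty)
    (hsucc : ∀ u ∈ S, u + 1 ∈ S) : S = univ := by
  obtain ⟨u, hu⟩ := hS
  have hreach : ∀ m : ℕ, u + (m : Fin N) ∈ S := by
    intro m
    induction m with
    | zero => simpa using hu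
    | succ m ih => simpa [Nat.cast_succ, add_assoc] using hsucc _ ih
  refine eq_univ_of_forall fun v => ?_
  simpa using hreach (v - u).val

theorem card_fwdEdges_self_lt {S : Finset (Fin N)} (hS : S.Nonempty) (hS' : S ≠ univ) :
    #(fwdEdges S S) < #S := by
  refine card_lt_card (filter_ssubset.2 ?_)
  by_contra! h
  exact hS' (eq_univ_of_add_one_mem hS h)

theorem crossEdges_subset (A B : Finset (Fin N)) :
    crossEdges A B ⊆ fwdEdges (A ∪ B) (A ∪ B) := by
  intro u
  simp only [crossEdges, fwdEdges, mem_union, mem_filter]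
  tauto

theorem crossEdges_ne_univ_of_odd (hodd : Odd N) {A B : Finset (Fin N)} (hAB : Disjoint A B) :
    crossEdges A B ≠ univ := by
  intro h
  have hmem : ∀ u, (u ∈ A ∧ u + 1 ∈ B) ∨ (u ∈ B ∧ u + 1 ∈ A) := fun u => by
    have hu : u ∈ crossEdges A B := h ▸ mem_univ u
    simpa [crossEdges, fwdEdges] using hu
  have heven := even_card_of_swaps (add_left_injective 1) hAB
    (eq_univ_of_forall fun u => by rcases hmem u with h | h <;> simp [h.1])
    (fun a ha => (hmem a).elim And.right fun h => absurd h.1 (disjoint_left.1 hAB ha))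
    (fun b hb => (hmem b).elim (fun h => absurd hb (disjoint_left.1 hAB h.1)) And.right)
  rw [Fintype.card_fin] at heven
  exact Nat.not_even_iff_odd.2 hodd heven

theorem isSubpartition_one_univ : IsSubpartition 1 fun _ => (univ : Finset (Fin N)) :=
  ⟨fun _ => univ_nonempty, fun i j hij => absurd (Subsingleton.elim i j) hij⟩

theorem fwdEdges_arc {a m : ℕ} (h : a + m ≤ N) (hm : m < N) :
    fwdEdges (arc a m) (arc a m) = (arc a (m - 1) : Finset (Fin N)) := by
  ext u
  simp only [fwdEdges, arc, mem_filter, mem_univ, true_and, val_add_one_eq]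
  split_ifs <;> omega

theorem mem_crossEdges_paritySplit {V : Finset (Fin N)} {u : Fin N} :
    u ∈ crossEdges (paritySplit V).1 (paritySplit V).2 ↔
      u ∈ fwdEdges V V ∧ (u.val + 1 < N ∨ Even N) := by
  simp only [crossEdges, fwdEdges, paritySplit, mem_union, mem_filter, val_add_one_eq]
  split_ifs with h
  · simp only [Nat.even_add_one, h, true_or, and_true]
    tauto
  · have hN : N = u.val + 1 := by omega
    simp only [hN, Nat.even_add_one, Even.zero, not_true_eq_false, and_false, false_or,
      and_true, lt_irrefl]
    tauto

theorem crossEdges_paritySplit_arc {a m : ℕ} (h : a + m ≤ N) (hm : m < N) :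
    crossEdges (paritySplit (arc a m)).1 (paritySplit (arc a m)).2 =
      (arc a (m - 1) : Finset (Fin N)) := by
  ext u
  rw [mem_crossEdges_paritySplit, fwdEdges_arc h hm]
  simp only [arc, mem_filter, mem_univ, true_and]
  omega

variable (hN : 3 ≤ N)
include hN

theorem sum_cycleWeight (u : Fin N) (B : Finset (Fin N)) :
    ∑ v ∈ B, cycleWeight N u v =
      (if u + 1 ∈ B then 1 else 0) + (if u - 1 ∈ B then 1 else 0) := by
  have hne := add_one_ne_sub_one hN u
  have : ∀ v, cycleWeight N u v =
      (if u + 1 = v then (1 : ℝ) else 0) + (if u - 1 = v then 1 else 0) := fun v => by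
    rw [cycleWeight_eq]
    by_cases h₁ : v = u + 1 <;> by_cases h₂ : v = u - 1 <;> simp_all [eq_comm]
  simp only [this, sum_add_distrib, sum_ite_eq]

theorem degree_cycleWeight (u : Fin N) : degree (cycleWeight N) u = 2 := by
  rw [degree, sum_cycleWeight hN]
  norm_num

theorem vol_cycleWeight (S : Finset (Fin N)) : vol (cycleWeight N) S = 2 * #S := by
  simp [vol, degree_cycleWeight hN, mul_comm]

theorem Ew_cycleWeight (A B : Finset (Fin N)) :
    Ew (cycleWeight N) A B = #(fwdEdges A B) + #(fwdEdges B A) := by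
  have : #(A.filter (· - 1 ∈ B)) = #(fwdEdges B A) :=
    card_nbij' (· - 1) (· + 1) (fun u hu => by simp_all [fwdEdges])
      (fun v hv => by simp_all [fwdEdges]) (fun u _ => by simp) (fun v _ => by simp)
  simp only [Ew, sum_cycleWeight hN, sum_add_distrib, sum_boole, this, fwdEdges]

theorem expansion_cycleWeight (S : Finset (Fin N)) :
    expansion (cycleWeight N) S = (#S - #(fwdEdges S S)) / #S := by
  have h := Ew_add_Ew_compl (cycleWeight N) S
  rw [Ew_cycleWeight hN, vol_cycleWeight hN] at h
  have hout : Ew (cycleWeight N) S Sᶜ = 2 * (#S - #(fwdEdges S S)) := by linarith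
  rw [expansion, vol_cycleWeight hN, hout, mul_div_mul_left _ _ two_ne_zero]

theorem expansion_cycleWeight_nonneg (S : Finset (Fin N)) : 0 ≤ expansion (cycleWeight N) S := by
  rw [expansion_cycleWeight hN]
  have : (#(fwdEdges S S) : ℝ) ≤ #S := by exact_mod_cast card_filter_le _ _
  positivity

theorem one_div_card_le_expansion {S : Finset (Fin N)} (hS : S.Nonempty) (hS' : S ≠ univ) :
    1 / (#S : ℝ) ≤ expansion (cycleWeight N) S := by
  rw [expansion_cycleWeight hN]
  have : (#(fwdEdges S S) : ℝ) + 1 ≤ #S := by exact_mod_cast card_fwdEdges_self_lt hS hS'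
  gcongr
  linarith

theorem phibar_cycleWeight {A B : Finset (Fin N)} (hAB : Disjoint A B) :
    phibar (cycleWeight N) A B = #(crossEdges A B) / #(A ∪ B) := by
  have hdisj : Disjoint (fwdEdges A B) (fwdEdges B A) := disjoint_filter_filter hAB
  rw [phibar, Ew_cycleWeight hN, vol_cycleWeight hN, crossEdges, card_union_of_disjoint hdisj]
  push_cast
  rw [mul_div_mul_left _ _ two_ne_zero]

theorem phibar_cycleWeight_le_one {A B : Finset (Fin N)} (hAB : Disjoint A B) :
    phibar (cycleWeight N) A B ≤ 1 := by
  rw [phibar_cycleWeight hN hAB]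
  have := card_le_card ((crossEdges_subset A B).trans (filter_subset _ _))
  exact div_le_one_of_le₀ (by exact_mod_cast this) (Nat.cast_nonneg _)

theorem phibar_cycleWeight_le {A B : Finset (Fin N)} (hAB : Disjoint A B)
    (hne : (A ∪ B).Nonempty) (hne' : A ∪ B ≠ univ) :
    phibar (cycleWeight N) A B ≤ 1 - 1 / #(A ∪ B) := by
  have hlt := (card_le_card (crossEdges_subset A B)).trans_lt (card_fwdEdges_self_lt hne hne')
  have hpos : (0 : ℝ) < #(A ∪ B) := by exact_mod_cast hne.card_pos
  rw [phibar_cycleWeight hN hAB, one_sub_div hpos.ne', div_le_div_iff_of_pos_right hpos]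
  have : (#(crossEdges A B) : ℝ) + 1 ≤ #(A ∪ B) := by exact_mod_cast hlt
  linarith

theorem phibar_cycleWeight_le_of_odd (hodd : Odd N) {A B : Finset (Fin N)} (hAB : Disjoint A B)
    (hne : (A ∪ B).Nonempty) :
    phibar (cycleWeight N) A B ≤ 1 - 1 / N := by
  by_cases huniv : A ∪ B = univ
  · have hlt := card_lt_card (ssubset_univ_iff.2 (crossEdges_ne_univ_of_odd hodd hAB))
    have hpos : (0 : ℝ) < N := by positivity
    rw [phibar_cycleWeight hN hAB, huniv, card_univ, Fintype.card_fin, one_sub_div hpos.ne',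
      div_le_div_iff_of_pos_right hpos]
    rw [card_univ, Fintype.card_fin] at hlt
    have : (#(crossEdges A B) : ℝ) + 1 ≤ N := by exact_mod_cast hlt
    linarith
  · refine (phibar_cycleWeight_le hN hAB hne huniv).trans ?_
    have : (#(A ∪ B) : ℝ) ≤ N := by
      exact_mod_cast (card_le_univ _).trans (Fintype.card_fin N).le
    gcongr

theorem expansion_arc {a m : ℕ} (h : a + m ≤ N) (hm : 0 < m) (hmN : m < N) :
    expansion (cycleWeight N) (arc a m) = 1 / m := by
  rw [expansion_cycleWeight hN, fwdEdges_arc h hmN, card_arc h, card_arc (by omega),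
    Nat.cast_pred hm, sub_sub_cancel]

theorem phibar_paritySplit_arc {a m : ℕ} (h : a + m ≤ N) (hm : 0 < m) (hmN : m < N) :
    phibar (cycleWeight N) (paritySplit (arc a m)).1 (paritySplit (arc a m)).2 = 1 - 1 / m := by
  rw [phibar_cycleWeight hN (disjoint_paritySplit _), paritySplit_union,
    crossEdges_paritySplit_arc h hmN, card_arc h, card_arc (by omega), Nat.cast_pred hm,
    sub_div, div_self (by positivity)]

theorem phibar_paritySplit_univ_of_odd (hodd : Odd N) :
    phibar (cycleWeight N) (paritySplit univ).1 (paritySplit univ).2 = 1 - 1 / N := by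
  have hcross : crossEdges (paritySplit univ).1 (paritySplit univ).2 =
      (arc 0 (N - 1) : Finset (Fin N)) := by
    ext u
    simp only [mem_crossEdges_paritySplit, fwdEdges, arc, mem_filter, mem_univ, true_and,
      Nat.not_even_iff_odd.2 hodd, or_false, zero_le, zero_add]
    omega
  rw [phibar_cycleWeight hN (disjoint_paritySplit _), paritySplit_union, hcross,
    card_arc (by omega), card_univ, Fintype.card_fin, Nat.cast_pred (by omega),
    sub_div, div_self (by positivity)]

theorem phibar_paritySplit_univ_of_even (heven : Even N) :
    phibar (cycleWeight N) (paritySplit univ).1 (paritySplit univ).2 = 1 := by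
  have hcross : crossEdges (paritySplit univ).1 (paritySplit univ).2 =
      (univ : Finset (Fin N)) := by
    ext u
    simp [mem_crossEdges_paritySplit, fwdEdges, heven]
  rw [phibar_cycleWeight hN (disjoint_paritySplit _), paritySplit_union, hcross,
    div_self (by simp; omega)]

theorem cheeger_cycleWeight_one : cheeger (cycleWeight N) 1 = 0 :=
  cheeger_eq_of_isLeast _ isSubpartition_one_univ (fun _ => expansion_univ _)
    fun _ _ => ⟨0, expansion_cycleWeight_nonneg hN _⟩

theorem dualCheeger_cycleWeight_one_of_odd (hodd : Odd N) :
    dualCheeger (cycleWeight N) 1 = 1 - 1 / N :=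
  dualCheeger_eq_of_isGreatest _ isSubpartition_one_univ.isSubBipartition_paritySplit
    (fun _ => phibar_paritySplit_univ_of_odd hN hodd)
    fun _ hQ => ⟨0, phibar_cycleWeight_le_of_odd hN hodd (hQ.1 0) (hQ.2.2 0)⟩

theorem dualCheeger_cycleWeight_one_of_even (heven : Even N) :
    dualCheeger (cycleWeight N) 1 = 1 :=
  dualCheeger_eq_of_isGreatest _ isSubpartition_one_univ.isSubBipartition_paritySplit
    (fun _ => phibar_paritySplit_univ_of_even hN heven)
    fun _ hQ => ⟨0, phibar_cycleWeight_le_one hN (hQ.1 0)⟩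

variable {k : ℕ} (hk : 2 ≤ k) (hkN : k ≤ N)
include hk hkN

theorem cheeger_cycleWeight : cheeger (cycleWeight N) k = 1 / (N / k : ℕ) := by
  have hm : 0 < N / k := Nat.div_pos hkN (by omega)
  have hmN : N / k < N := Nat.div_lt_self (by omega) (by omega)
  have : NeZero k := ⟨by omega⟩
  refine cheeger_eq_of_isLeast _ (isSubpartition_arcs hm (Nat.mul_div_le N k))
    (fun i => expansion_arc hN
      ((mul_add_le_mul_of_lt _ i.isLt).trans (Nat.mul_div_le N k)) hm hmN)
    fun Q hQ => ?_
  obtain ⟨i, hcard, hne⟩ := exists_card_le_div_ne_univ hk Q hQ.1 hQ.2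
  refine ⟨i, le_trans ?_ (one_div_card_le_expansion hN (hQ.1 i) hne)⟩
  gcongr
  exact_mod_cast (hQ.1 i).card_pos

theorem dualCheeger_cycleWeight : dualCheeger (cycleWeight N) k = 1 - 1 / (N / k : ℕ) := by
  have hm : 0 < N / k := Nat.div_pos hkN (by omega)
  have hmN : N / k < N := Nat.div_lt_self (by omega) (by omega)
  have : NeZero k := ⟨by omega⟩
  refine dualCheeger_eq_of_isGreatest _
    (isSubpartition_arcs hm (Nat.mul_div_le N k)).isSubBipartition_paritySplit
    (fun i => phibar_paritySplit_arc hN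
      ((mul_add_le_mul_of_lt _ i.isLt).trans (Nat.mul_div_le N k)) hm hmN)
    fun Q hQ => ?_
  obtain ⟨i, hcard, hne⟩ := exists_card_le_div_ne_univ hk _ hQ.2.2 hQ.2.1
  refine ⟨i, (phibar_cycleWeight_le hN (hQ.1 i) (hQ.2.2 i) hne).trans ?_⟩
  gcongr
  exact_mod_cast (hQ.2.2 i).card_pos

end Cycle

/-- Proposition 7.3: Cheeger and dual Cheeger constants of the unweighted
cycle `C_N`. -/
theorem unweighted_cycle_cheeger_constants {N : ℕ} (hN : 3 ≤ N) :
    cheeger (cycleWeight N) 1 = 0 ∧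
    (Odd N → dualCheeger (cycleWeight N) 1 = ((N : ℝ) - 1) / N) ∧
    (Even N → dualCheeger (cycleWeight N) 1 = 1) ∧
    ∀ k : ℕ, 2 ≤ k → k ≤ N →
      cheeger (cycleWeight N) k = 1 / ((N / k : ℕ) : ℝ) ∧
      dualCheeger (cycleWeight N) k = 1 - 1 / ((N / k : ℕ) : ℝ) := by
  have : NeZero N := ⟨by omega⟩
  refine ⟨cheeger_cycleWeight_one hN, fun hodd => ?_, dualCheeger_cycleWeight_one_of_even hN,
    fun k hk hkN => ⟨cheeger_cycleWeight hN hk hkN, dualCheeger_cycleWeight hN hk hkN⟩⟩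
  rw [dualCheeger_cycleWeight_one_of_odd hN hodd, one_sub_div (by positivity)]

end DualCheeger
end
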